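/- For every natural number n, applying the product of operators (X + q s D_q)(X + q³ s D_q) ⋯ (X + q^{2n-1} s D_q) (with the factor (X + q^{2n-1} s D_q) acting first) to the constant polynomial 1 yields the polynomial h_n(x,s). -/

import Mathlib

noncomputable section

/-- The field `ℚ(q,s)` of rational functions in two indeterminates. -/
abbrev F : Type := FractionRing (MvPolynomial (Fin 2) ℚ)

/-- The indeterminate `q`. -/
def q : F := algebraMap (MvPolynomial (Fin 2) ℚ) F (MvPolynomial.X 0)

/-- The indeterminate `s`. -/
def s : F := algebraMap (MvPolynomial (Fin 2) ℚ) F (MvPolynomial.X 1)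

/-- The q-integer `[n]_q = 1 + q + ⋯ + q^{n-1}`. -/
def qInt (n : ℕ) : F := ∑ i ∈ Finset.range n, q ^ i

/-- The q-factorial `[n]_q! = ∏_{k=1}^n [k]_q`. -/
def qFact (n : ℕ) : F := ∏ k ∈ Finset.range n, qInt (k + 1)

/-- The q-binomial coefficient `[n choose k]_q = [n]_q!/([k]_q! [n-k]_q!)`. -/
def qBinom (n k : ℕ) : F := qFact n / (qFact k * qFact (n - k))

/-- The operator `X` of multiplication by `x` on `F[x]`. -/
def Xop : Module.End F (Polynomial F) := LinearMap.mulLeft F Polynomial.X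

/-- Division by `x` (discarding the constant term), as a linear map. -/
def divXL : Polynomial F →ₗ[F] Polynomial F where
  toFun := Polynomial.divX
  map_add' p r := Polynomial.divX_add
  map_smul' a p := by
    ext n
    simp [Polynomial.coeff_divX, Polynomial.coeff_smul]

/-- The q-derivative `D_q f(x) = (f(qx) - f(x))/((q-1)x)`; it is the F-linear
operator on `F[x]` determined by `D_q x^n = [n]_q x^{n-1}`. -/
def Dq : Module.End F (Polynomial F) :=
  (q - 1)⁻¹ •
    (divXL ∘ₗ
      ((Polynomial.aeval (Polynomial.C q * Polynomial.X)).toLinearMap - LinearMap.id))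

/-- The polynomials `h_n(x,t) = Σ_j q^{j²} t^j [n]_q!/((1+q)⋯(1+q^j)·[j]_q!·[n-2j]_q!)
x^{n-2j}` (the parameter `t` will be specialized to `s` or `q²s`). -/
def h (t : F) (n : ℕ) : Polynomial F :=
  ∑ j ∈ Finset.range (n / 2 + 1),
    Polynomial.C (q ^ (j ^ 2) * t ^ j * qFact n /
        ((∏ i ∈ Finset.range j, (1 + q ^ (i + 1))) * qFact j * qFact (n - 2 * j))) *
      Polynomial.X ^ (n - 2 * j)


/-- `G(n) = (X + q s D_q)(X + q³ s D_q) ⋯ (X + q^{2n-1} s D_q)`,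
with the factor `(X + q^{2n-1} s D_q)` acting first. -/
def Gop : ℕ → Module.End F (Polynomial F)
  | 0 => 1
  | n + 1 => Gop n * (Xop + (q ^ (2 * n + 1) * s) • Dq)


/-! Write `G_t(n) = (X + q t D_q)(X + q³ t D_q) ⋯ (X + q^{2n-1} t D_q)`, so that `G(n) = G_s(n)`.
Peeling off the leftmost factor gives `G_t(n+1) = (X + q t D_q) G_{q²t}(n)`, so by induction
on `n`, simultaneously for all `t`, it suffices to show `(X + q t D_q) h_n(x, q²t) = h_{n+1}(x, t)`.
Since `X x^e = x^{e+1}` and `D_q x^e = [e]_q x^{e-1}`, comparing coefficients of `x^{n-1-2j}`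
reduces this to the recurrence
`c_t(n+1, j+1) = c_{q²t}(n, j+1) + q t [n-2j]_q c_{q²t}(n, j)`
for the coefficients `c` of `h`, a consequence of
`[n+1]_q = (1 + q^{j+1}) [j+1]_q + q^{2j+2} [n-2j-1]_q`. -/

open Polynomial Finset

lemma ne_zero_of_algebraMap_eq {x : F} {p : MvPolynomial (Fin 2) ℚ}
    (hx : algebraMap _ F p = x) (hp : MvPolynomial.eval 0 p ≠ 0) : x ≠ 0 := by
  rw [← hx, map_ne_zero_iff _ (IsFractionRing.injective _ _)]
  rintro rfl
  exact hp (map_zero _)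

lemma q_sub_one_ne_zero : q - 1 ≠ 0 :=
  ne_zero_of_algebraMap_eq (p := MvPolynomial.X 0 - 1) (by simp [q]) (by simp)

lemma qInt_succ_ne_zero (n : ℕ) : qInt (n + 1) ≠ 0 :=
  ne_zero_of_algebraMap_eq (p := ∑ i ∈ range (n + 1), MvPolynomial.X 0 ^ i)
    (by simp [qInt, q]) (by simp [sum_range_succ'])

lemma one_add_q_pow_succ_ne_zero (n : ℕ) : 1 + q ^ (n + 1) ≠ 0 :=
  ne_zero_of_algebraMap_eq (p := 1 + MvPolynomial.X 0 ^ (n + 1)) (by simp [q]) (by simp)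

lemma qFact_ne_zero (n : ℕ) : qFact n ≠ 0 :=
  prod_ne_zero_iff.2 fun k _ => qInt_succ_ne_zero k

@[simp] lemma qInt_zero : qInt 0 = 0 := sum_range_zero _

@[simp] lemma qInt_one : qInt 1 = 1 := by simp [qInt]

@[simp] lemma qFact_zero : qFact 0 = 1 := prod_range_zero _

@[simp] lemma qFact_one : qFact 1 = 1 := by simp [qFact]

lemma qFact_succ (n : ℕ) : qFact (n + 1) = qFact n * qInt (n + 1) :=
  prod_range_succ _ _

lemma qInt_add (m k : ℕ) : qInt (m + k) = qInt m + q ^ m * qInt k := by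
  simp [qInt, sum_range_add, mul_sum, pow_add]

lemma qInt_two_mul_add (j k : ℕ) :
    qInt (2 * j + k) = (1 + q ^ j) * qInt j + q ^ (2 * j) * qInt k := by
  rw [qInt_add, two_mul, qInt_add]
  ring

lemma Dq_X_pow (n : ℕ) : Dq (X ^ n : F[X]) = C (qInt n) * X ^ (n - 1) := by
  have hdivX : divXL (C (q ^ n - 1) * X ^ n) =
      if n = 0 then 0 else C (q ^ n - 1) * X ^ (n - 1) :=
    divX_C_mul_X_pow
  have hgeom : (q - 1)⁻¹ * (q ^ n - 1) = qInt n := by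
    rw [inv_mul_eq_iff_eq_mul₀ q_sub_one_ne_zero, qInt, mul_comm, geom_sum_mul]
  simp only [Dq, LinearMap.smul_apply, LinearMap.comp_apply, LinearMap.sub_apply,
    AlgHom.toLinearMap_apply, LinearMap.id_apply, map_pow, aeval_X, mul_pow]
  rw [← C_pow, ← sub_one_mul, ← C_1, ← C_sub, hdivX]
  split_ifs with hn
  · simp [hn]
  · rw [smul_eq_C_mul, ← mul_assoc, ← C_mul, hgeom]

lemma Xop_add_smul_Dq_apply_C_mul_X_pow (c a : F) (e : ℕ) :
    (Xop + c • Dq) (C a * X ^ e) = C a * X ^ (e + 1) + C (c * qInt e * a) * X ^ (e - 1) := by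
  have hX : Xop (C a * X ^ e) = C a * X ^ (e + 1) := by
    rw [Xop, LinearMap.mulLeft_apply, pow_succ]
    ring
  have hD : Dq (C a * X ^ e) = C (qInt e * a) * X ^ (e - 1) := by
    rw [← smul_eq_C_mul, map_smul, Dq_X_pow, smul_eq_C_mul, ← mul_assoc, ← C_mul, mul_comm a]
  rw [LinearMap.add_apply, LinearMap.smul_apply, hX, hD, smul_eq_C_mul, ← mul_assoc, ← C_mul,
    mul_assoc c]

def prodOneAddQPow (j : ℕ) : F := ∏ i ∈ range j, (1 + q ^ (i + 1))

lemma prodOneAddQPow_ne_zero (j : ℕ) : prodOneAddQPow j ≠ 0 :=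
  prod_ne_zero_iff.2 fun i _ => one_add_q_pow_succ_ne_zero i

lemma prodOneAddQPow_succ (j : ℕ) :
    prodOneAddQPow (j + 1) = prodOneAddQPow j * (1 + q ^ (j + 1)) :=
  prod_range_succ _ _

/-- Extended by zero to `n < 2 * j`, where the formula of `h` would give junk through truncated
subtraction; this makes `hCoeff_succ_succ` hold for every `j`. -/
def hCoeff (t : F) (n j : ℕ) : F :=
  if 2 * j ≤ n then
    q ^ (j ^ 2) * t ^ j * qFact n / (prodOneAddQPow j * qFact j * qFact (n - 2 * j))
  else 0

lemma hCoeff_zero_right (t : F) (n : ℕ) : hCoeff t n 0 = 1 := by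
  rw [hCoeff, if_pos n.zero_le]
  simp [prodOneAddQPow, qFact_ne_zero]

lemma hCoeff_of_lt (t : F) {n j : ℕ} (h : n < 2 * j) : hCoeff t n j = 0 :=
  if_neg (by omega)

lemma hCoeff_two_mul_add_two (t : F) (j : ℕ) :
    hCoeff t (2 * j + 2) (j + 1) = q * t * hCoeff (q ^ 2 * t) (2 * j + 1) j := by
  have := prodOneAddQPow_ne_zero j
  have := one_add_q_pow_succ_ne_zero j
  have := qFact_ne_zero j
  have := qInt_succ_ne_zero j
  have hsplit : qInt (2 * j + 2) = (1 + q ^ (j + 1)) * qInt (j + 1) := by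
    rw [show 2 * j + 2 = 2 * (j + 1) + 0 by ring, qInt_two_mul_add, qInt_zero]
    ring
  rw [hCoeff, hCoeff, if_pos (by omega), if_pos (by omega),
    show 2 * j + 2 - 2 * (j + 1) = 0 by omega, show 2 * j + 1 - 2 * j = 1 by omega,
    qFact_succ (2 * j + 1), qFact_succ j, prodOneAddQPow_succ, hsplit, qFact_zero, qFact_one]
  field_simp
  ring

lemma hCoeff_two_mul_add_add_three (t : F) (j a : ℕ) :
    hCoeff t (2 * j + a + 3) (j + 1) = hCoeff (q ^ 2 * t) (2 * j + a + 2) (j + 1)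
      + q * t * qInt (a + 2) * hCoeff (q ^ 2 * t) (2 * j + a + 2) j := by
  have := prodOneAddQPow_ne_zero j
  have := one_add_q_pow_succ_ne_zero j
  have := qFact_ne_zero j
  have := qInt_succ_ne_zero j
  have := qFact_ne_zero a
  have := qInt_succ_ne_zero a
  have := qInt_succ_ne_zero (a + 1)
  rw [hCoeff, hCoeff, hCoeff, if_pos (by omega), if_pos (by omega), if_pos (by omega),
    show 2 * j + a + 3 - 2 * (j + 1) = a + 1 by omega,
    show 2 * j + a + 2 - 2 * (j + 1) = a by omega, show 2 * j + a + 2 - 2 * j = a + 2 by omega,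
    qFact_succ (2 * j + a + 2), qFact_succ (a + 1), qFact_succ a, qFact_succ j,
    prodOneAddQPow_succ, show 2 * j + a + 2 + 1 = 2 * (j + 1) + (a + 1) by ring,
    qInt_two_mul_add]
  field_simp
  ring

lemma hCoeff_succ_succ (t : F) (n j : ℕ) :
    hCoeff t (n + 1) (j + 1)
      = hCoeff (q ^ 2 * t) n (j + 1) + q * t * qInt (n - 2 * j) * hCoeff (q ^ 2 * t) n j := by
  obtain hn | rfl | rfl | ⟨a, rfl⟩ :
      n < 2 * j ∨ n = 2 * j ∨ n = 2 * j + 1 ∨ ∃ a, n = 2 * j + a + 2 := by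
    rcases lt_or_ge n (2 * j + 2) with hn | hn
    · omega
    · exact Or.inr (Or.inr (Or.inr ⟨n - (2 * j + 2), by omega⟩))
  · rw [hCoeff_of_lt _ (by omega), hCoeff_of_lt _ (by omega), hCoeff_of_lt _ hn]
    ring
  · rw [hCoeff_of_lt _ (by omega), hCoeff_of_lt _ (by omega), Nat.sub_self, qInt_zero]
    ring
  · rw [hCoeff_two_mul_add_two, hCoeff_of_lt (q ^ 2 * t) (show 2 * j + 1 < 2 * (j + 1) by omega),
      show 2 * j + 1 - 2 * j = 1 by omega, qInt_one]
    ring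
  · rw [hCoeff_two_mul_add_add_three, show 2 * j + a + 2 - 2 * j = a + 2 by omega]

lemma h_eq_sum_hCoeff (t : F) (n : ℕ) :
    h t n = ∑ j ∈ range (n + 1), C (hCoeff t n j) * X ^ (n - 2 * j) := by
  rw [h, ← sum_subset (range_subset_range.2 (by omega : n / 2 + 1 ≤ n + 1))]
  · refine sum_congr rfl fun j hj => ?_
    rw [hCoeff, if_pos (by rw [mem_range] at hj; omega)]
    rfl
  · intro j _ hj
    rw [hCoeff_of_lt t (by rw [mem_range] at hj; omega), C_0, zero_mul]

lemma C_hCoeff_mul_X_pow_succ (t : F) (n j : ℕ) :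
    C (hCoeff t n j) * X ^ (n - 2 * j + 1) = C (hCoeff t n j) * X ^ (n + 1 - 2 * j) := by
  rcases le_or_gt (2 * j) n with hj | hj
  · rw [Nat.sub_add_comm hj]
  · rw [hCoeff_of_lt t hj, C_0, zero_mul, zero_mul]

lemma Xop_add_smul_Dq_apply_h (t : F) (n : ℕ) :
    (Xop + (q * t) • Dq) (h (q ^ 2 * t) n) = h t (n + 1) := by
  have hexp : ∀ j, n + 1 - 2 * (j + 1) = n - 2 * j - 1 := fun j => by omega
  rw [h_eq_sum_hCoeff, h_eq_sum_hCoeff, map_sum, sum_range_succ' _ (n + 1)]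
  simp only [Xop_add_smul_Dq_apply_C_mul_X_pow, hCoeff_succ_succ, C_add, add_mul, sum_add_distrib,
    C_hCoeff_mul_X_pow_succ]
  rw [sum_range_succ' (fun j => C (hCoeff (q ^ 2 * t) n j) * X ^ (n + 1 - 2 * j)),
    sum_range_succ (fun j => C (hCoeff (q ^ 2 * t) n (j + 1)) * X ^ (n + 1 - 2 * (j + 1))),
    hCoeff_of_lt (q ^ 2 * t) (show n < 2 * (n + 1) by omega), hCoeff_zero_right,
    hCoeff_zero_right]
  simp only [hexp, C_0, zero_mul, add_zero]
  abel

def GopAt (t : F) : ℕ → Module.End F F[X]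
  | 0 => 1
  | n + 1 => GopAt t n * (Xop + (q ^ (2 * n + 1) * t) • Dq)

lemma Gop_eq_GopAt (n : ℕ) : Gop n = GopAt s n := by
  induction n with
  | zero => rfl
  | succ n ih => rw [Gop, GopAt, ih]

lemma GopAt_succ_eq_mul (t : F) (n : ℕ) :
    GopAt t (n + 1) = (Xop + (q * t) • Dq) * GopAt (q ^ 2 * t) n := by
  induction n with
  | zero => simp [GopAt]
  | succ n ih =>
    rw [GopAt, ih, GopAt, mul_assoc,
      show q ^ (2 * n + 1) * (q ^ 2 * t) = q ^ (2 * (n + 1) + 1) * t by ring]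

lemma GopAt_apply_one (t : F) (n : ℕ) : GopAt t n 1 = h t n := by
  induction n generalizing t with
  | zero => simp [GopAt, h_eq_sum_hCoeff, hCoeff_zero_right]
  | succ n ih => rw [GopAt_succ_eq_mul, Module.End.mul_apply, ih, Xop_add_smul_Dq_apply_h]

theorem Gop_apply_one (n : ℕ) : Gop n (1 : Polynomial F) = h s n := by
  rw [Gop_eq_GopAt, GopAt_apply_one]

end
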